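/- arXiv:1107.4722 — 3 statements merged into one kernel-verified Lean document; each statement's English description precedes it below -/
import Mathlib

section
/- Let u : ℝ → ℝ be nondecreasing and concave, and for a finite multiset of nonnegative reals let I_k(x) denote the sum of the k largest entries of x. Then I_k is submodular as a function on ℝ^n with the coordinatewise lattice structure: for all x, y ∈ ℝ^n, I_k(x ⊔ y) + I_k(x ⊓ y) ≤ I_k(x) + I_k(y). -/
open Finset

/-- `sumTopK n k x` is the sum of the `k` largest coordinates of a vector
`x : Fin n → ℝ` with nonnegative entries, realized as the maximum of
`∑ i ∈ s, x i` over subsets `s` with `|s| ≤ k`. -/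
noncomputable def sumTopK (n k : ℕ) (x : Fin n → ℝ) : ℝ :=
  ((Finset.univ.powerset.filter (fun s : Finset (Fin n) => s.card ≤ k)).sup'
    ⟨∅, by simp⟩ (fun s => ∑ i ∈ s, x i))

private lemma pointwise_key (a b s t : ℝ) (hst : s ≤ t) :
    max (max a b - t) 0 + max (min a b - s) 0 ≤ max (a - t) 0 + max (b - s) 0 := by
  rcases le_total a b with h | h <;> simp only [max_def, min_def] <;>
    split_ifs <;> linarith

private lemma sumTopK_le_level (n k : ℕ) (x : Fin n → ℝ) (t : ℝ) (ht : 0 ≤ t) :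
    sumTopK n k x ≤ k * t + ∑ i, max (x i - t) 0 := by
  unfold sumTopK
  apply Finset.sup'_le
  intro s hs
  simp only [mem_filter, mem_powerset] at hs
  calc ∑ i ∈ s, x i ≤ ∑ i ∈ s, (t + max (x i - t) 0) := by
        refine Finset.sum_le_sum fun i _ => ?_
        have := le_max_left (x i - t) (0:ℝ)
        linarith
    _ = s.card * t + ∑ i ∈ s, max (x i - t) 0 := by
        rw [Finset.sum_add_distrib, Finset.sum_const, nsmul_eq_mul]
    _ ≤ k * t + ∑ i, max (x i - t) 0 := by
        have h1 : (s.card : ℝ) * t ≤ (k : ℝ) * t := by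
          have hc : (s.card : ℝ) ≤ (k : ℝ) := by exact_mod_cast hs.2
          nlinarith
        have h2 : ∑ i ∈ s, max (x i - t) 0 ≤ ∑ i, max (x i - t) 0 :=
          Finset.sum_le_sum_of_subset_of_nonneg (Finset.subset_univ s)
            (fun i _ _ => le_max_right _ _)
        linarith

private lemma exists_top_set (n : ℕ) (x : Fin n → ℝ) :
    ∀ k, k ≤ n → ∃ s : Finset (Fin n), s.card = k ∧ ∀ j ∉ s, ∀ i ∈ s, x j ≤ x i := by
  intro k
  induction k with
  | zero => intro _; exact ⟨∅, by simp⟩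
  | succ k ih =>
    intro hk
    obtain ⟨s, hcard, hprop⟩ := ih (Nat.le_of_succ_le hk)
    have hne : sᶜ.Nonempty := by
      rw [← Finset.card_pos, Finset.card_compl]
      simp only [Fintype.card_fin, hcard]
      omega
    obtain ⟨j, hj, hmax⟩ := Finset.exists_max_image sᶜ x hne
    refine ⟨insert j s, ?_, ?_⟩
    · rw [Finset.card_insert_of_notMem (Finset.mem_compl.mp hj), hcard]
    · intro j' hj' i hi
      have hj's : j' ∉ s := fun h => hj' (Finset.mem_insert_of_mem h)
      rcases Finset.mem_insert.mp hi with rfl | hi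
      · exact hmax j' (Finset.mem_compl.mpr hj's)
      · exact hprop j' hj's i hi

private lemma le_sumTopK (n k : ℕ) (x : Fin n → ℝ) (s : Finset (Fin n))
    (hs : s.card ≤ k) : ∑ i ∈ s, x i ≤ sumTopK n k x := by
  unfold sumTopK
  refine Finset.le_sup' (fun s => ∑ i ∈ s, x i) ?_
  simp [hs]

private lemma exists_level (n k : ℕ) (x : Fin n → ℝ) (hx : ∀ i, 0 ≤ x i) :
    ∃ t : ℝ, 0 ≤ t ∧ k * t + ∑ i, max (x i - t) 0 ≤ sumTopK n k x := by
  rcases Nat.eq_zero_or_pos k with rfl | hk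
  · refine ⟨∑ i, x i, Finset.sum_nonneg fun i _ => hx i, ?_⟩
    have h1 : ∀ i : Fin n, max (x i - ∑ j, x j) 0 = 0 := by
      intro i
      have : x i ≤ ∑ j, x j :=
        Finset.single_le_sum (fun j _ => hx j) (Finset.mem_univ i)
      exact max_eq_right (by linarith)
    have h2 : (0:ℝ) ≤ sumTopK n 0 x := by
      simpa using le_sumTopK n 0 x ∅ (by simp)
    simp only [h1, Finset.sum_const_zero, Nat.cast_zero, zero_mul, zero_add]
    exact h2
  rcases le_or_gt n k with hnk | hkn
  · refine ⟨0, le_refl _, ?_⟩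
    have h1 : ∀ i : Fin n, max (x i - 0) 0 = x i := fun i => by
      rw [sub_zero]; exact max_eq_left (hx i)
    simp only [h1, mul_zero, zero_add]
    exact le_sumTopK n k x Finset.univ (by simpa using hnk)
  · obtain ⟨s, hcard, hprop⟩ := exists_top_set n x k hkn.le
    have hne : s.Nonempty := Finset.card_pos.mp (hcard ▸ hk)
    set t := s.inf' hne x with htdef
    have ht0 : 0 ≤ t := Finset.le_inf' hne x fun i _ => hx i
    refine ⟨t, ht0, ?_⟩
    have hin : ∀ i ∈ s, max (x i - t) 0 = x i - t := fun i hi =>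
      max_eq_left (by linarith [Finset.inf'_le x hi])
    have hout : ∀ i ∈ sᶜ, max (x i - t) 0 = 0 := by
      intro i hi
      have : x i ≤ t :=
        Finset.le_inf' hne x fun j hj => hprop i (Finset.mem_compl.mp hi) j hj
      exact max_eq_right (by linarith)
    have hsplit : ∑ i, max (x i - t) 0 = ∑ i ∈ s, (x i - t) := by
      rw [← Finset.sum_add_sum_compl s (fun i => max (x i - t) 0),
          Finset.sum_congr rfl hin, Finset.sum_congr rfl hout]
      simp
    have : (k : ℝ) * t + ∑ i ∈ s, (x i - t) = ∑ i ∈ s, x i := by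
      rw [Finset.sum_sub_distrib, Finset.sum_const, nsmul_eq_mul, hcard]
      ring
    rw [hsplit, this]
    exact le_sumTopK n k x s hcard.le

/-- `I_k`, the sum of the `k` largest coordinates, is submodular on `ℝ^n`
(with the coordinatewise lattice structure) over nonnegative vectors:
`I_k (x ⊔ y) + I_k (x ⊓ y) ≤ I_k x + I_k y`. -/
theorem sumTopK_submodular (n k : ℕ) (x y : Fin n → ℝ)
    (hx : ∀ i, 0 ≤ x i) (hy : ∀ i, 0 ≤ y i) :
    sumTopK n k (x ⊔ y) + sumTopK n k (x ⊓ y) ≤ sumTopK n k x + sumTopK n k y := by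
  obtain ⟨t, ht0, ht⟩ := exists_level n k x hx
  obtain ⟨s, hs0, hs⟩ := exists_level n k y hy
  have hsupmax : ∀ i, (x ⊔ y) i = max (x i) (y i) := fun i => rfl
  have hinfmin : ∀ i, (x ⊓ y) i = min (x i) (y i) := fun i => rfl
  rcases le_total s t with hst | hts
  · have h1 := sumTopK_le_level n k (x ⊔ y) t ht0
    have h2 := sumTopK_le_level n k (x ⊓ y) s hs0
    have h3 : ∑ i, max ((x ⊔ y) i - t) 0 + ∑ i, max ((x ⊓ y) i - s) 0 ≤
        ∑ i, max (x i - t) 0 + ∑ i, max (y i - s) 0 := by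
      rw [← Finset.sum_add_distrib, ← Finset.sum_add_distrib]
      refine Finset.sum_le_sum fun i _ => ?_
      rw [hsupmax, hinfmin]
      exact pointwise_key (x i) (y i) s t hst
    linarith
  · have h1 := sumTopK_le_level n k (x ⊔ y) s hs0
    have h2 := sumTopK_le_level n k (x ⊓ y) t ht0
    have h3 : ∑ i, max ((x ⊔ y) i - s) 0 + ∑ i, max ((x ⊓ y) i - t) 0 ≤
        ∑ i, max (y i - s) 0 + ∑ i, max (x i - t) 0 := by
      rw [← Finset.sum_add_distrib, ← Finset.sum_add_distrib]
      refine Finset.sum_le_sum fun i _ => ?_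
      rw [hsupmax, hinfmin, max_comm (x i) (y i), min_comm (x i) (y i)]
      exact pointwise_key (y i) (x i) t s hts
    linarith
end

section
/- Let u : ℝ → ℝ be nondecreasing and concave with u(0) = 0, and define u_k(x) = u(I_k(x)) where I_k(x) is the sum of the k largest coordinates of x ∈ ℝ≥0^n. Then u_k is monotone and submodular: for all x ≤ y coordinatewise, u_k(x) ≤ u_k(y), and for all x, y, u_k(x ⊔ y) + u_k(x ⊓ y) ≤ u_k(x) + u_k(y). -/
open Finset

/-- `u_k x = u (I_k x)`, where `I_k x` is the sum of the `k` largest coordinates. -/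
noncomputable def uTopK (u : ℝ → ℝ) (n k : ℕ) (x : Fin n → ℝ) : ℝ :=
  u (sumTopK n k x)

/-! For nonnegative `x`, `I_k(x) = min_{t ≥ 0} (k t + ∑ᵢ (xᵢ - t)⁺)`, the minimum being attained at
a `k`-th largest coordinate (or at `0` when `k ≥ n`). Pointwise,
`(a ⊔ b - t)⁺ + (a ⊓ b - s)⁺ ≤ (a - s)⁺ + (b - t)⁺` for `s ≤ t`, so evaluating the bounds for
`x ⊔ y` and `x ⊓ y` at the minimisers for `x` and `y` gives `I_k(x ⊔ y) + I_k(x ⊓ y) ≤ I_k(x) + I_k(y)`.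
As `I_k(x ⊓ y)` is below both `I_k(x)` and `I_k(y)`, concavity and monotonicity of `u` turn this
into submodularity of `u ∘ I_k`. -/

theorem Finset.exists_card_eq_forall_notMem_le {ι α : Type*} [Fintype ι] [LinearOrder α]
    (f : ι → α) {k : ℕ} (hk : k ≤ Fintype.card ι) :
    ∃ S : Finset ι, S.card = k ∧ ∀ i ∈ S, ∀ j ∉ S, f j ≤ f i := by
  classical
  induction k with
  | zero => exact ⟨∅, by simp, by simp⟩
  | succ m ih =>
    obtain ⟨S, hcard, hS⟩ := ih (Nat.le_of_succ_le hk)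
    have hne : Sᶜ.Nonempty := by
      rw [← Finset.card_pos, Finset.card_compl, hcard]
      omega
    obtain ⟨j₀, hj₀, hmax⟩ := Finset.exists_max_image Sᶜ f hne
    have hj₀S : j₀ ∉ S := Finset.mem_compl.mp hj₀
    refine ⟨insert j₀ S, by rw [Finset.card_insert_of_notMem hj₀S, hcard], ?_⟩
    intro i hi j hj
    have hjS : j ∉ S := fun h => hj (Finset.mem_insert_of_mem h)
    rcases Finset.mem_insert.mp hi with rfl | hiS
    · exact hmax j (Finset.mem_compl.mpr hjS)
    · exact hS i hiS j hjS

theorem ConcaveOn.add_le_add_sub {s : Set ℝ} {f : ℝ → ℝ} (hf : ConcaveOn ℝ s f) {a b c : ℝ}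
    (ha : a ∈ s) (hbc : b + c - a ∈ s) (hab : a ≤ b) (hac : a ≤ c) :
    f a + f (b + c - a) ≤ f b + f c := by
  rcases hab.eq_or_lt with rfl | hab
  · simp
  -- `b` and `c` are the convex combinations of `a` and `b + c - a` with swapped weights
  set D := b + c - 2 * a with hD_def
  have hD : 0 < D := by linarith
  have hweights : (c - a) / D + (b - a) / D = 1 := by
    rw [← add_div, div_eq_one_iff_eq hD.ne']; ring
  have hb := hf.2 ha hbc (div_nonneg (sub_nonneg.2 hac) hD.le)
    (div_nonneg (sub_nonneg.2 hab.le) hD.le) hweights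
  have hc := hf.2 ha hbc (div_nonneg (sub_nonneg.2 hab.le) hD.le)
    (div_nonneg (sub_nonneg.2 hac) hD.le) ((add_comm _ _).trans hweights)
  have hb_eq : ((c - a) / D) • a + ((b - a) / D) • (b + c - a) = b := by
    simp only [smul_eq_mul]; field_simp; rw [hD_def]; ring
  have hc_eq : ((b - a) / D) • a + ((c - a) / D) • (b + c - a) = c := by
    simp only [smul_eq_mul]; field_simp; rw [hD_def]; ring
  rw [hb_eq, smul_eq_mul, smul_eq_mul] at hb
  rw [hc_eq, smul_eq_mul, smul_eq_mul] at hc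
  linear_combination hb + hc - (f a + f (b + c - a)) * hweights

theorem posPart_sup_sub_add_posPart_inf_sub_le {a b s t : ℝ} (hst : s ≤ t) :
    (a ⊔ b - t)⁺ + (a ⊓ b - s)⁺ ≤ (a - s)⁺ + (b - t)⁺ := by
  rcases le_total a b with h | h <;>
    simp only [posPart, max_def, min_def] <;> split_ifs <;> linarith

section sumTopK

variable {n k : ℕ}

theorem sum_le_sumTopK (x : Fin n → ℝ) {s : Finset (Fin n)} (hs : s.card ≤ k) :
    ∑ i ∈ s, x i ≤ sumTopK n k x :=
  Finset.le_sup' (fun s => ∑ i ∈ s, x i) (by simpa using hs)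

theorem sumTopK_nonneg (x : Fin n → ℝ) : 0 ≤ sumTopK n k x := by
  simpa using sum_le_sumTopK (k := k) x (s := ∅) (Nat.zero_le k)

theorem monotone_sumTopK : Monotone (sumTopK n k) := fun _ y hxy =>
  Finset.sup'_le _ _ fun _ hs =>
    (Finset.sum_le_sum fun i _ => hxy i).trans (Finset.le_sup' (fun s => ∑ i ∈ s, y i) hs)

theorem sumTopK_le_mul_add_sum_posPart (x : Fin n → ℝ) {t : ℝ} (ht : 0 ≤ t) :
    sumTopK n k x ≤ k * t + ∑ i, (x i - t)⁺ := by
  refine Finset.sup'_le _ _ fun s hs => ?_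
  have hcard : s.card ≤ k := (Finset.mem_filter.mp hs).2
  calc ∑ i ∈ s, x i ≤ ∑ i ∈ s, (t + (x i - t)⁺) :=
        Finset.sum_le_sum fun i _ => by linarith [le_posPart (x i - t)]
    _ = s.card * t + ∑ i ∈ s, (x i - t)⁺ := by simp [Finset.sum_add_distrib]
    _ ≤ k * t + ∑ i, (x i - t)⁺ := by
        gcongr
        exact Finset.subset_univ s

theorem exists_mul_add_sum_posPart_le_sumTopK {x : Fin n → ℝ} (hx : 0 ≤ x) :
    ∃ t, 0 ≤ t ∧ k * t + ∑ i, (x i - t)⁺ ≤ sumTopK n k x := by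
  obtain ⟨S, hcard, hS⟩ := Finset.exists_card_eq_forall_notMem_le x (k := min k n) (by simp)
  -- the largest coordinate outside `S`, or `0` if there is none
  set t : ℝ := ((Sᶜ.sup fun j => (x j).toNNReal : NNReal) : ℝ)
  have ht_out : ∀ j ∉ S, x j ≤ t := fun j hj =>
    (Real.le_coe_toNNReal (x j)).trans
      (NNReal.coe_le_coe.2 (Finset.le_sup (f := fun j => (x j).toNNReal) (Finset.mem_compl.2 hj)))
  have ht_in : ∀ i ∈ S, t ≤ x i := fun i hi => by
    rw [← Real.coe_toNNReal (x i) (hx i)]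
    exact NNReal.coe_le_coe.2 (Finset.sup_le fun j hj =>
      Real.toNNReal_le_toNNReal (hS i hi j (Finset.mem_compl.1 hj)))
  have hkt : (k : ℝ) * t = S.card * t := by
    rcases le_total k n with hkn | hnk
    · rw [hcard, min_eq_left hkn]
    · have hS_univ : S = univ := Finset.eq_univ_of_card S (by simp [hcard, hnk])
      simp [t, hS_univ]
  refine ⟨t, NNReal.coe_nonneg _, ?_⟩
  calc k * t + ∑ i, (x i - t)⁺ = k * t + ∑ i ∈ S, (x i - t) := by
        congr 1
        rw [← Finset.sum_subset (Finset.subset_univ S)]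
        · exact Finset.sum_congr rfl fun i hi => posPart_eq_self.2 (sub_nonneg.2 (ht_in i hi))
        · exact fun j _ hj => posPart_eq_zero.2 (sub_nonpos.2 (ht_out j hj))
    _ = ∑ i ∈ S, x i := by rw [hkt, Finset.sum_sub_distrib]; simp
    _ ≤ sumTopK n k x := sum_le_sumTopK x (hcard ▸ min_le_left k n)

theorem sumTopK_sup_add_sumTopK_inf_le {x y : Fin n → ℝ} (hx : 0 ≤ x) (hy : 0 ≤ y) :
    sumTopK n k (x ⊔ y) + sumTopK n k (x ⊓ y) ≤ sumTopK n k x + sumTopK n k y := by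
  obtain ⟨s, hs, hsx⟩ := exists_mul_add_sum_posPart_le_sumTopK (k := k) hx
  obtain ⟨t, ht, hty⟩ := exists_mul_add_sum_posPart_le_sumTopK (k := k) hy
  wlog hst : s ≤ t generalizing x y s t
  · simpa only [sup_comm, inf_comm, add_comm] using this hy hx t ht hty s hs hsx (le_of_not_ge hst)
  have hpointwise : ∑ i, ((x ⊔ y) i - t)⁺ + ∑ i, ((x ⊓ y) i - s)⁺ ≤
      ∑ i, (x i - s)⁺ + ∑ i, (y i - t)⁺ := by
    simp only [← Finset.sum_add_distrib]
    exact Finset.sum_le_sum fun i _ => posPart_sup_sub_add_posPart_inf_sub_le hst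
  linarith [sumTopK_le_mul_add_sum_posPart (k := k) (x ⊔ y) ht,
    sumTopK_le_mul_add_sum_posPart (k := k) (x ⊓ y) hs]

end sumTopK

theorem uTopK_monotone_submodular_general (u : ℝ → ℝ)
    (hconc : ConcaveOn ℝ (Set.Ici (0 : ℝ)) u) (hmono : Monotone u)
    (n k : ℕ) :
    (∀ x y : Fin n → ℝ, (∀ i, 0 ≤ x i) → (∀ i, x i ≤ y i) →
      uTopK u n k x ≤ uTopK u n k y) ∧
    (∀ x y : Fin n → ℝ, (∀ i, 0 ≤ x i) → (∀ i, 0 ≤ y i) →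
      uTopK u n k (x ⊔ y) + uTopK u n k (x ⊓ y) ≤ uTopK u n k x + uTopK u n k y) := by
  refine ⟨fun x y _ hxy => hmono (monotone_sumTopK hxy), fun x y hx hy => ?_⟩
  have hinf_le_x : sumTopK n k (x ⊓ y) ≤ sumTopK n k x := monotone_sumTopK inf_le_left
  have hinf_le_y : sumTopK n k (x ⊓ y) ≤ sumTopK n k y := monotone_sumTopK inf_le_right
  have hinf_nonneg : 0 ≤ sumTopK n k (x ⊓ y) := sumTopK_nonneg _
  calc uTopK u n k (x ⊔ y) + uTopK u n k (x ⊓ y)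
      ≤ u (sumTopK n k x + sumTopK n k y - sumTopK n k (x ⊓ y)) + u (sumTopK n k (x ⊓ y)) :=
        add_le_add (hmono (by linarith [sumTopK_sup_add_sumTopK_inf_le (k := k) hx hy])) le_rfl
    _ ≤ uTopK u n k x + uTopK u n k y := by
        rw [add_comm]
        exact hconc.add_le_add_sub hinf_nonneg (by simp only [Set.mem_Ici]; linarith)
          hinf_le_x hinf_le_y

/-- For `u` nondecreasing, concave with `u 0 = 0`, the function
`u_k x = u (I_k x)` is monotone and submodular on nonnegative vectors. -/
theorem uTopK_monotone_submodular (u : ℝ → ℝ)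
    (hconc : ConcaveOn ℝ (Set.Ici (0 : ℝ)) u) (hmono : Monotone u)
    (h0 : u 0 = 0) (n k : ℕ) :
    (∀ x y : Fin n → ℝ, (∀ i, 0 ≤ x i) → (∀ i, x i ≤ y i) →
      uTopK u n k x ≤ uTopK u n k y) ∧
    (∀ x y : Fin n → ℝ, (∀ i, 0 ≤ x i) → (∀ i, 0 ≤ y i) →
      uTopK u n k (x ⊔ y) + uTopK u n k (x ⊓ y) ≤ uTopK u n k x + uTopK u n k y) :=
  uTopK_monotone_submodular_general u hconc hmono n k
end

section
/- Let u be a nondecreasing concave function, X a nonnegative random variable, and Y₁, Y₂ nonnegative random variables independent of X with distributions D₁ and D₂ such that D₁ stochastically dominates D₂ (i.e., P(Y₁ ≥ a) ≥ P(Y₂ ≥ a) for all a ≥ 0). Then E[u(X + Y₁) - u(Y₁)] ≤ E[u(X + Y₂) - u(Y₂)]. -/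
/-!
For fixed `x ≥ 0`, concavity makes the increment `y ↦ u (x + y) - u y` antitone on `[0, ∞)`, and
monotonicity makes it nonnegative. By the layer-cake formula, the expectation of a nonnegative
antitone function of `Y` is an integral of probabilities of lower sets, and first-order stochastic
dominance of `Y₁` over `Y₂` says exactly that `Y₁` gives every lower set at most the mass `Y₂`
gives it. Independence lets us integrate out `Y` with `X` frozen, which reduces the theorem to
this one-dimensional comparison.
-/

open MeasureTheory ProbabilityTheory Set
open scoped ENNReal

theorem ConcaveOn.add_le_add_of_le_of_add_eq {s : Set ℝ} {f : ℝ → ℝ} (hf : ConcaveOn ℝ s f)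
    {a b x y : ℝ} (ha : a ∈ s) (hb : b ∈ s) (hax : a ≤ x) (hxb : x ≤ b) (hxy : x + y = a + b) :
    f a + f b ≤ f x + f y := by
  obtain rfl : y = a + b - x := by linarith
  rcases hax.eq_or_lt with rfl | hax
  · simp
  have hab : 0 < b - a := by linarith
  set t := (b - x) / (b - a) with ht
  have ht0 : 0 ≤ t := div_nonneg (by linarith) hab.le
  have ht1 : t ≤ 1 := (div_le_one hab).2 (by linarith)
  have hx : t • a + (1 - t) • b = x := by
    simp only [smul_eq_mul, ht]; field_simp; ring
  have hy : (1 - t) • a + t • b = a + b - x := by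
    simp only [smul_eq_mul, ht]; field_simp; ring
  have h₁ := hf.2 ha hb ht0 (sub_nonneg.2 ht1) (by ring)
  have h₂ := hf.2 ha hb (sub_nonneg.2 ht1) ht0 (by ring)
  rw [hx, smul_eq_mul, smul_eq_mul] at h₁
  rw [hy, smul_eq_mul, smul_eq_mul] at h₂
  linarith

theorem ConcaveOn.add_sub_le_add_sub {s : Set ℝ} {f : ℝ → ℝ} (hf : ConcaveOn ℝ s f)
    {a b x : ℝ} (ha : a ∈ s) (hb : x + b ∈ s) (hx : 0 ≤ x) (hab : a ≤ b) :
    f (x + b) - f b ≤ f (x + a) - f a := by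
  have := hf.add_le_add_of_le_of_add_eq (x := x + a) (y := b) ha hb (by linarith) (by linarith)
    (by ring)
  linarith

theorem IsUpperSet.eq_iUnion_Ici_rat {s : Set ℝ} (hs : IsUpperSet s) (hmin : ∀ a, ¬IsLeast s a) :
    s = ⋃ q : {q : ℚ // (q : ℝ) ∈ s}, Ici (q : ℝ) := by
  refine Subset.antisymm (fun y hy => ?_) (iUnion_subset fun q => hs.Ici_subset q.2)
  obtain ⟨z, hz, hzy⟩ : ∃ z ∈ s, z < y := by
    simpa [IsLeast, lowerBounds, hy] using hmin y
  obtain ⟨q, hzq, hqy⟩ := exists_rat_btwn hzy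
  exact mem_iUnion.2 ⟨⟨q, hs hzq.le hz⟩, hqy.le⟩

def StochasticallyDominates (μ ν : Measure ℝ) : Prop :=
  ∀ a, ν (Ici a) ≤ μ (Ici a)

namespace StochasticallyDominates

variable {μ ν : Measure ℝ}

theorem measure_le_of_isUpperSet (h : StochasticallyDominates μ ν) {s : Set ℝ}
    (hs : IsUpperSet s) : ν s ≤ μ s := by
  by_cases hmin : ∃ a, IsLeast s a
  · obtain ⟨a, ha⟩ := hmin
    rw [Subset.antisymm (fun y hy => ha.2 hy) (hs.Ici_subset ha.1)]
    exact h a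
  · push Not at hmin
    have hanti : Antitone fun q : {q : ℚ // (q : ℝ) ∈ s} => Ici (q : ℝ) :=
      fun q r hqr => Ici_subset_Ici.2 (by exact_mod_cast hqr)
    rw [hs.eq_iUnion_Ici_rat hmin, hanti.measure_iUnion, hanti.measure_iUnion]
    exact iSup_mono fun q => h q

theorem measure_le_of_isLowerSet [IsProbabilityMeasure μ] [IsProbabilityMeasure ν]
    (h : StochasticallyDominates μ ν) {s : Set ℝ} (hs : IsLowerSet s) : μ s ≤ ν s := by
  have hmeas : MeasurableSet sᶜ := hs.compl.ordConnected.measurableSet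
  rw [← compl_compl s, prob_compl_eq_one_sub hmeas, prob_compl_eq_one_sub hmeas]
  exact tsub_le_tsub_left (h.measure_le_of_isUpperSet hs.compl) 1

theorem lintegral_le_of_antitone [IsProbabilityMeasure μ] [IsProbabilityMeasure ν]
    (h : StochasticallyDominates μ ν) {f : ℝ → ℝ} (hf : Antitone f) (hf0 : 0 ≤ f) :
    ∫⁻ y, ENNReal.ofReal (f y) ∂μ ≤ ∫⁻ y, ENNReal.ofReal (f y) ∂ν := by
  rw [lintegral_eq_lintegral_meas_lt μ (ae_of_all _ hf0) hf.measurable.aemeasurable,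
    lintegral_eq_lintegral_meas_lt ν (ae_of_all _ hf0) hf.measurable.aemeasurable]
  exact lintegral_mono fun t => h.measure_le_of_isLowerSet fun a b hba ha => ha.trans_le (hf hba)

end StochasticallyDominates

theorem stochasticallyDominates_map_of_nonneg {Ω : Type*} [MeasurableSpace Ω] {μ : Measure Ω}
    {Y₁ Y₂ : Ω → ℝ} (hY₁ : ∀ ω, 0 ≤ Y₁ ω) (hY₁meas : Measurable Y₁) (hY₂meas : Measurable Y₂)
    (hdom : ∀ a : ℝ, 0 ≤ a → μ {ω | a ≤ Y₂ ω} ≤ μ {ω | a ≤ Y₁ ω}) :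
    StochasticallyDominates (μ.map Y₁) (μ.map Y₂) := by
  intro a
  rw [Measure.map_apply hY₁meas measurableSet_Ici, Measure.map_apply hY₂meas measurableSet_Ici]
  rcases le_or_gt 0 a with ha | ha
  · exact hdom a ha
  · have : Y₁ ⁻¹' Ici a = univ := eq_univ_of_forall fun ω => ha.le.trans (hY₁ ω)
    rw [this]
    exact measure_mono (subset_univ _)

theorem ProbabilityTheory.IndepFun.lintegral_comp_eq_lintegral_lintegral_map {Ω α β : Type*} [MeasurableSpace Ω]
    [MeasurableSpace α] [MeasurableSpace β] {μ : Measure Ω} [IsFiniteMeasure μ]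
    {X : Ω → α} {Y : Ω → β} (hXY : IndepFun X Y μ) (hX : Measurable X) (hY : Measurable Y)
    {F : α × β → ℝ≥0∞} (hF : Measurable F) :
    ∫⁻ ω, F (X ω, Y ω) ∂μ = ∫⁻ ω, ∫⁻ y, F (X ω, y) ∂(μ.map Y) ∂μ := by
  rw [← lintegral_map hF (hX.prodMk hY), hXY.map_prod_eq_prod_map_map hX.aemeasurable
    hY.aemeasurable, lintegral_prod _ hF.aemeasurable, lintegral_map hF.lintegral_prod_right' hX]

theorem integral_comp_le_of_indepFun_of_stochasticallyDominates {Ω α : Type*}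
    [MeasurableSpace Ω] [MeasurableSpace α] {μ : Measure Ω} [IsProbabilityMeasure μ]
    {X : Ω → α} {Y₁ Y₂ : Ω → ℝ} (hX : Measurable X) (hY₁ : Measurable Y₁) (hY₂ : Measurable Y₂)
    (hind₁ : IndepFun X Y₁ μ) (hind₂ : IndepFun X Y₂ μ)
    (hdom : StochasticallyDominates (μ.map Y₁) (μ.map Y₂))
    {g : α → ℝ → ℝ} (hg : Measurable (Function.uncurry g)) (hanti : ∀ ω, Antitone (g (X ω)))
    (hnonneg : ∀ ω, 0 ≤ g (X ω)) (hint : Integrable (fun ω => g (X ω) (Y₂ ω)) μ) :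
    ∫ ω, g (X ω) (Y₁ ω) ∂μ ≤ ∫ ω, g (X ω) (Y₂ ω) ∂μ := by
  have := Measure.isProbabilityMeasure_map (μ := μ) hY₁.aemeasurable
  have := Measure.isProbabilityMeasure_map (μ := μ) hY₂.aemeasurable
  have hF : Measurable fun p : α × ℝ => ENNReal.ofReal (g p.1 p.2) := hg.ennreal_ofReal
  rw [integral_eq_lintegral_of_nonneg_ae (ae_of_all _ fun ω => hnonneg ω _)
      (hg.comp (hX.prodMk hY₁)).aestronglyMeasurable,
    integral_eq_lintegral_of_nonneg_ae (ae_of_all _ fun ω => hnonneg ω _)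
      (hg.comp (hX.prodMk hY₂)).aestronglyMeasurable]
  refine ENNReal.toReal_mono hint.lintegral_lt_top.ne ?_
  rw [hind₁.lintegral_comp_eq_lintegral_lintegral_map hX hY₁ hF,
    hind₂.lintegral_comp_eq_lintegral_lintegral_map hX hY₂ hF]
  exact lintegral_mono fun ω => hdom.lintegral_le_of_antitone (hanti ω) (hnonneg ω)

theorem stochastic_dominance_marginal_utility_general
    {Ω : Type*} [MeasureSpace Ω] [IsProbabilityMeasure (ℙ : Measure Ω)]
    (u : ℝ → ℝ) (hconc : ConcaveOn ℝ (Set.Ici (0 : ℝ)) u) (hmono : Monotone u)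
    (X Y₁ Y₂ : Ω → ℝ)
    (hX : ∀ ω, 0 ≤ X ω) (hY₁ : ∀ ω, 0 ≤ Y₁ ω) (hY₂ : ∀ ω, 0 ≤ Y₂ ω)
    (hXmeas : Measurable X) (hY₁meas : Measurable Y₁) (hY₂meas : Measurable Y₂)
    (hind₁ : IndepFun X Y₁ ℙ) (hind₂ : IndepFun X Y₂ ℙ)
    (hdom : ∀ a : ℝ, 0 ≤ a → ℙ {ω | a ≤ Y₂ ω} ≤ ℙ {ω | a ≤ Y₁ ω})
    (hint₂ : Integrable (fun ω => u (X ω + Y₂ ω)) ℙ)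
    (hint₄ : Integrable (fun ω => u (Y₂ ω)) ℙ) :
    ∫ ω, (u (X ω + Y₁ ω) - u (Y₁ ω)) ∂ℙ ≤ ∫ ω, (u (X ω + Y₂ ω) - u (Y₂ ω)) ∂ℙ := by
  -- clamping `y` at `0` makes the increment antitone in `y` on all of `ℝ`
  set g : ℝ → ℝ → ℝ := fun x y => u (x + max y 0) - u (max y 0)
  have hg : Measurable (Function.uncurry g) := by
    have hu := hmono.measurable
    fun_prop
  have hg_eq : ∀ Y : Ω → ℝ, (∀ ω, 0 ≤ Y ω) →
      (fun ω => g (X ω) (Y ω)) = fun ω => u (X ω + Y ω) - u (Y ω) := fun Y hY =>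
    funext fun ω => by simp only [g, max_eq_left (hY ω)]
  have hanti : ∀ ω, Antitone (g (X ω)) := fun ω a b hab =>
    hconc.add_sub_le_add_sub (le_max_right a 0) (add_nonneg (hX ω) (le_max_right b 0)) (hX ω)
      (max_le_max_right 0 hab)
  have hnonneg : ∀ ω, 0 ≤ g (X ω) := fun ω y =>
    sub_nonneg.2 (hmono (le_add_of_nonneg_left (hX ω)))
  have key := integral_comp_le_of_indepFun_of_stochasticallyDominates hXmeas hY₁meas hY₂meas
    hind₁ hind₂ (stochasticallyDominates_map_of_nonneg hY₁ hY₁meas hY₂meas hdom) hg hanti hnonneg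
    (by rw [hg_eq Y₂ hY₂]; exact hint₂.sub hint₄)
  rwa [hg_eq Y₁ hY₁, hg_eq Y₂ hY₂] at key

/-- **Stochastic dominance decreases expected marginal utility.**
If `u` is nondecreasing and concave on `[0,∞)`, `X, Y₁, Y₂` are nonnegative
random variables with `X` independent of each `Yᵢ`, and the distribution of
`Y₁` stochastically dominates that of `Y₂`
(`P(Y₁ ≥ a) ≥ P(Y₂ ≥ a)` for all `a ≥ 0`), then
`E[u (X + Y₁) - u Y₁] ≤ E[u (X + Y₂) - u Y₂]`. -/
theorem stochastic_dominance_marginal_utility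
    {Ω : Type*} [MeasureSpace Ω] [IsProbabilityMeasure (ℙ : Measure Ω)]
    (u : ℝ → ℝ) (hconc : ConcaveOn ℝ (Set.Ici (0 : ℝ)) u) (hmono : Monotone u)
    (X Y₁ Y₂ : Ω → ℝ)
    (hX : ∀ ω, 0 ≤ X ω) (hY₁ : ∀ ω, 0 ≤ Y₁ ω) (hY₂ : ∀ ω, 0 ≤ Y₂ ω)
    (hXmeas : Measurable X) (hY₁meas : Measurable Y₁) (hY₂meas : Measurable Y₂)
    (hind₁ : IndepFun X Y₁ ℙ) (hind₂ : IndepFun X Y₂ ℙ)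
    (hdom : ∀ a : ℝ, 0 ≤ a → ℙ {ω | a ≤ Y₂ ω} ≤ ℙ {ω | a ≤ Y₁ ω})
    (hint₁ : Integrable (fun ω => u (X ω + Y₁ ω)) ℙ)
    (hint₂ : Integrable (fun ω => u (X ω + Y₂ ω)) ℙ)
    (hint₃ : Integrable (fun ω => u (Y₁ ω)) ℙ)
    (hint₄ : Integrable (fun ω => u (Y₂ ω)) ℙ) :
    ∫ ω, (u (X ω + Y₁ ω) - u (Y₁ ω)) ∂ℙ ≤ ∫ ω, (u (X ω + Y₂ ω) - u (Y₂ ω)) ∂ℙ :=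
  stochastic_dominance_marginal_utility_general u hconc hmono X Y₁ Y₂ hX hY₁ hY₂ hXmeas hY₁meas
    hY₂meas hind₁ hind₂ hdom hint₂ hint₄
end
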